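/- Let A be an associative unital K-algebra equipped with a Manin system x of size 2. Then for all natural numbers a, b: x_{2,2}^a x_{1,1}^b = ∑_{s=0}^{min(a,b)} q^{−s(s−1)/2} (q^{−1} − q)^s [s]_q! [a choose s]_q [b choose s]_q · x_{2,1}^s x_{1,1}^{b−s} x_{2,2}^{a−s} x_{1,2}^s. (Lemma 'fact', a straightening rule in Manin's quantized coordinate algebra 𝒪_q(2).) -/

import Mathlib

open scoped BigOperators

/-- The variable `q` in the field `K = ℚ(q)` of rational functions. -/
noncomputable def q : RatFunc ℚ := RatFunc.X

/-- The balanced quantum integer `[n]_q = (q^n − q^{−n})/(q − q⁻¹)`. -/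
noncomputable def qint (n : ℤ) : RatFunc ℚ := (q ^ n - q ^ (-n)) / (q - q⁻¹)

/-- The quantum factorial `[s]_q! = ∏_{i=1}^s [i]_q`. -/
noncomputable def qfact (s : ℕ) : RatFunc ℚ := ∏ i ∈ Finset.range s, qint ((i : ℤ) + 1)

/-- The balanced quantum binomial coefficient
`[m choose s]_q = ([m]_q [m−1]_q ⋯ [m−s+1]_q)/[s]_q!`. -/
noncomputable def qbinom (m : ℤ) (s : ℕ) : RatFunc ℚ :=
  (∏ i ∈ Finset.range s, qint (m - (i : ℤ))) / qfact s

/-- A *Manin system* of size `n` in an associative unital `ℚ(q)`-algebra `A`: a family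
`x i j` satisfying the defining relations of Manin's quantized coordinate algebra
`𝒪_q(n)` of `n × n` matrices. -/
structure IsManinSystem {A : Type*} [Ring A] [Algebra (RatFunc ℚ) A] {n : ℕ}
    (x : Fin n → Fin n → A) : Prop where
  comm : ∀ i j k l : Fin n, i < k → l < j → x i j * x k l = x k l * x i j
  main : ∀ i j k l : Fin n, k < i → l < j →
    x i j * x k l = x k l * x i j - (q - q⁻¹) • (x i l * x k j)
  row : ∀ i j l : Fin n, l < j → x i j * x i l = q⁻¹ • (x i l * x i j)
  col : ∀ i j k : Fin n, i < k → x i j * x k j = q • (x k j * x i j)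

lemma hq0 : q ≠ 0 := RatFunc.X_ne_zero

lemma hpow (k : ℕ) (hk : 0 < k) : q ^ k ≠ 1 := by
  intro h
  have h2 : (algebraMap (Polynomial ℚ) (RatFunc ℚ)) (Polynomial.X ^ k) =
      (algebraMap (Polynomial ℚ) (RatFunc ℚ)) 1 := by
    simpa [map_pow, RatFunc.algebraMap_X, q] using h
  have := RatFunc.algebraMap_injective ℚ h2
  have hdeg := congrArg Polynomial.natDegree this
  simp [Polynomial.natDegree_X_pow] at hdeg
  omega

lemma hden : q - q⁻¹ ≠ 0 := by
  intro h
  have h1 : q * q - 1 = 0 := by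
    have := congrArg (fun y => y * q) h
    simp only [sub_mul, inv_mul_cancel₀ hq0, zero_mul] at this
    exact this
  have : q ^ 2 = 1 := by rw [pow_two]; linear_combination h1
  exact hpow 2 (by norm_num) this

lemma qzpow_ne (n : ℤ) : q ^ n ≠ 0 := zpow_ne_zero n hq0

lemma qint_zero : qint 0 = 0 := by simp [qint]

lemma qint_pos_ne (n : ℤ) (hn : 0 < n) : qint n ≠ 0 := by
  unfold qint
  apply div_ne_zero _ hden
  intro h
  have h1 : q ^ n = q ^ (-n) := sub_eq_zero.mp h
  have h2 : q ^ (2 * n) = 1 := by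
    have := congrArg (fun y => y * q ^ n) h1
    simp only [← zpow_add₀ hq0] at this
    simpa [two_mul] using this
  lift (2 * n) to ℕ using (by omega) with k hk
  have h3 : q ^ k = 1 := by rw [← zpow_natCast]; exact h2
  exact hpow k (by omega) h3

lemma qfact_ne (s : ℕ) : qfact s ≠ 0 := by
  unfold qfact
  apply Finset.prod_ne_zero_iff.mpr
  intro i _
  exact qint_pos_ne _ (by positivity)

lemma qint_one : qint 1 = 1 := by
  rw [qint, div_eq_one_iff_eq hden]
  norm_num

lemma qint_succ (n : ℤ) : qint (n+1) = q ^ n + q⁻¹ * qint n := by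
  have hq : q⁻¹ = q ^ (-1 : ℤ) := by norm_num
  have key : q ^ (n+1) - q ^ (-(n+1)) = q ^ n * (q - q⁻¹) + q ^ (-1:ℤ) * (q ^ n - q ^ (-n)) := by
    rw [mul_sub, mul_sub, ← zpow_add₀ hq0, ← zpow_add₀ hq0, ← zpow_add_one₀ hq0]
    rw [show -1 + n = n - 1 by ring, show (-1) + -n = -(n+1) by ring]
    have : q ^ n * q⁻¹ = q ^ (n - 1) := by
      rw [hq, ← zpow_add₀ hq0, show n + -1 = n - 1 by ring]
    rw [this]; ring
  rw [qint, qint, key, hq]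
  have hden' : q - q ^ (-1:ℤ) ≠ 0 := by rw [← hq]; exact hden
  rw [add_div, mul_div_assoc, mul_div_assoc, div_self hden', mul_one]

lemma pascal (α σ : ℤ) : qint (α+1) = q^(-(σ+1)) * qint (α-σ) + q^(α-σ) * qint (σ+1) := by
  have key : q ^ (α+1) - q ^ (-(α+1)) =
      q^(-(σ+1)) * (q ^ (α-σ) - q ^ (-(α-σ))) + q^(α-σ) * (q ^ (σ+1) - q ^ (-(σ+1))) := by
    rw [mul_sub, mul_sub, ← zpow_add₀ hq0, ← zpow_add₀ hq0, ← zpow_add₀ hq0, ← zpow_add₀ hq0]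
    rw [show -(σ+1) + (α-σ) = α - 2*σ - 1 by ring, show -(σ+1) + -(α-σ) = -(α+1) by ring,
        show α - σ + (σ+1) = α + 1 by ring, show α - σ + -(σ+1) = α - 2*σ - 1 by ring]
    ring
  rw [qint, qint, qint, mul_div_assoc', mul_div_assoc', ← add_div, key]

noncomputable def cc (a b s : ℕ) : RatFunc ℚ :=
  q ^ (-((s * (s - 1) / 2 : ℕ) : ℤ)) * (q⁻¹ - q) ^ s * qfact s *
    qbinom (a : ℤ) s * qbinom (b : ℤ) s

lemma qbinom_zero (m : ℤ) : qbinom m 0 = 1 := by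
  simp [qbinom, qfact]

lemma cc_zero (a b : ℕ) : cc a b 0 = 1 := by
  simp [cc, qbinom_zero, qfact]

lemma qbinom_nat_zero (n k : ℕ) (h : n < k) : qbinom (n : ℤ) k = 0 := by
  unfold qbinom
  rw [Finset.prod_eq_zero (Finset.mem_range.mpr h) (by simp [qint_zero]), zero_div]

lemma cc_eq_zero (a b s : ℕ) (h : b < s) : cc a b s = 0 := by
  unfold cc
  rw [qbinom_nat_zero b s h, mul_zero]

lemma qfact_succ (s : ℕ) : qfact (s+1) = qfact s * qint ((s:ℤ)+1) := by
  rw [qfact, Finset.prod_range_succ]; rfl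

lemma triangle (s : ℕ) : ((s+1) * s / 2 : ℕ) = s*(s-1)/2 + s := by
  rcases s with _ | t
  · simp
  · have : (t+2) * (t+1) = (t+1)*t + (t+1)*2 := by ring
    rw [Nat.succ_sub_one, this, Nat.add_mul_div_right _ _ (by norm_num)]

lemma qt_succ (s : ℕ) :
    q ^ (-(((s+1) * (s+1-1) / 2 : ℕ) : ℤ)) = q ^ (-((s*(s-1)/2 : ℕ) : ℤ)) * q⁻¹ ^ s := by
  have h : ((s+1) * (s+1-1) / 2 : ℕ) = s*(s-1)/2 + s := by simpa using triangle s
  rw [h]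
  have h2 : (-((s*(s-1)/2 + s : ℕ) : ℤ)) = (-((s*(s-1)/2 : ℕ) : ℤ)) + (-(s:ℤ)) := by
    push_cast; ring
  rw [h2, zpow_add₀ hq0]
  congr 1
  rw [zpow_neg, zpow_natCast, inv_pow]

lemma cc_eq (a b s : ℕ) :
    cc a b s = (q ^ (-((s*(s-1)/2 : ℕ) : ℤ)) * (q⁻¹ - q) ^ s *
      (∏ i ∈ Finset.range s, qint ((a:ℤ) - (i:ℤ))) *
      (∏ i ∈ Finset.range s, qint ((b:ℤ) - (i:ℤ)))) / qfact s := by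
  have hF := qfact_ne s
  unfold cc qbinom
  simp only [← mul_div_assoc, div_mul_eq_mul_div, div_div]
  rw [div_eq_div_iff (mul_ne_zero hF hF) hF]
  ring

lemma c_rec (a b s : ℕ) (hs : s ≤ a) :
    cc (a+1) b (s+1) = q⁻¹^(s+1) * cc a b (s+1)
      + (q⁻¹ - q) * q⁻¹^s * q^(a-s) * qint ((b-s : ℕ)) * cc a b s := by
  rcases lt_or_ge s b with hb | hb
  · -- main case
    have hcastb : ((b - s : ℕ) : ℤ) = (b:ℤ) - s := by omega
    have hcasta : ((a - s : ℕ) : ℤ) = (a:ℤ) - s := by omega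
    have hqa : q ^ ((a:ℤ) - (s:ℤ)) = q ^ (a-s : ℕ) := by rw [← hcasta, zpow_natCast]
    have hqs : q ^ (-((s:ℤ)+1)) = q⁻¹ ^ (s+1) := by
      have h3 : ((s:ℤ)+1) = ((s+1 : ℕ) : ℤ) := by push_cast; ring
      rw [zpow_neg, h3, zpow_natCast, inv_pow]
    have hpa1 : ∏ i ∈ Finset.range (s+1), qint (((a+1:ℕ):ℤ) - (i:ℤ))
        = qint ((a:ℤ)+1) * ∏ i ∈ Finset.range s, qint ((a:ℤ) - (i:ℤ)) := by
      have hstep : ∀ i ∈ Finset.range s,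
          qint (((a+1:ℕ):ℤ) - ((i+1:ℕ):ℤ)) = qint ((a:ℤ) - (i:ℤ)) := by
        intro i _
        congr 1
        push_cast
        ring
      have h0 : qint (((a+1:ℕ):ℤ) - ((0:ℕ):ℤ)) = qint ((a:ℤ)+1) := by norm_num
      rw [Finset.prod_range_succ', Finset.prod_congr rfl hstep, h0, mul_comm]
    have hpa : ∏ i ∈ Finset.range (s+1), qint ((a:ℤ) - (i:ℤ))
        = (∏ i ∈ Finset.range s, qint ((a:ℤ) - (i:ℤ))) * qint ((a:ℤ) - s) :=
      Finset.prod_range_succ _ _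
    have hpb : ∏ i ∈ Finset.range (s+1), qint ((b:ℤ) - (i:ℤ))
        = (∏ i ∈ Finset.range s, qint ((b:ℤ) - (i:ℤ))) * qint ((b:ℤ) - s) :=
      Finset.prod_range_succ _ _
    rw [cc_eq (a+1) b (s+1), cc_eq a b (s+1), cc_eq a b s]
    rw [hpa1, hpa, hpb, qfact_succ, qt_succ, hcastb]
    rw [pascal (a:ℤ) (s:ℤ), hqa, hqs]
    set Qt := q ^ (-((s*(s-1)/2 : ℕ) : ℤ)) with hQt
    set Pa := ∏ i ∈ Finset.range s, qint ((a:ℤ) - (i:ℤ)) with hPa2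
    set Pb := ∏ i ∈ Finset.range s, qint ((b:ℤ) - (i:ℤ)) with hPb2
    set S := qint ((s:ℤ)+1) with hSdef
    set F := qfact s with hFdef
    set Aq := qint ((a:ℤ) - (s:ℤ)) with hAq
    set Bq := qint ((b:ℤ) - (s:ℤ)) with hBq
    have hF : F ≠ 0 := qfact_ne s
    have hS : S ≠ 0 := qint_pos_ne ((s:ℤ)+1) (by positivity)
    have hFS : F * S ≠ 0 := mul_ne_zero hF hS
    simp only [← mul_div_assoc, div_mul_eq_mul_div, div_div]
    rw [div_add_div _ _ hFS hF, div_eq_div_iff hFS (mul_ne_zero hFS hF)]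
    ring
  · -- degenerate case
    rw [cc_eq_zero (a+1) b (s+1) (by omega), cc_eq_zero a b (s+1) (by omega)]
    rcases eq_or_lt_of_le hb with hb' | hb'
    · subst hb'
      simp [qint_zero]
    · rw [cc_eq_zero a b s hb']
      simp

lemma cc_eq_zero' (a b s : ℕ) (h : a < s) : cc a b s = 0 := by
  unfold cc
  rw [qbinom_nat_zero a s h, mul_zero, zero_mul]

section Alg
variable {A : Type*} [Ring A] [Algebra (RatFunc ℚ) A]

lemma pow_comm_left {u v : A} {r : RatFunc ℚ} (h : u * v = r • (v * u)) (m : ℕ) :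
    u ^ m * v = (r ^ m) • (v * u ^ m) := by
  induction m with
  | zero => simp
  | succ m ih =>
    rw [pow_succ, mul_assoc, h, mul_smul_comm, ← mul_assoc, ih, smul_mul_assoc,
      smul_smul, mul_assoc, ← pow_succ, ← pow_succ']

lemma pow_comm_right {u v : A} {r : RatFunc ℚ} (h : u * v = r • (v * u)) (m : ℕ) :
    u * v ^ m = (r ^ m) • (v ^ m * u) := by
  induction m with
  | zero => simp
  | succ m ih =>
    rw [pow_succ, ← mul_assoc, ih, smul_mul_assoc, mul_assoc, h, mul_smul_comm,
      smul_smul, ← mul_assoc, ← pow_succ]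

variable {x : Fin 2 → Fin 2 → A}

lemma Xpow_Z (hx : IsManinSystem x) (m : ℕ) : x 0 0 ^ m * x 1 0 = (q ^ m) • (x 1 0 * x 0 0 ^ m) :=
  pow_comm_left (hx.col 0 0 1 (by decide)) m

lemma Y_Zpow (hx : IsManinSystem x) (s : ℕ) : x 1 1 * x 1 0 ^ s = (q⁻¹ ^ s) • (x 1 0 ^ s * x 1 1) :=
  pow_comm_right (hx.row 1 1 0 (by decide)) s

lemma W_Ypow (hx : IsManinSystem x) (m : ℕ) : x 0 1 * x 1 1 ^ m = (q ^ m) • (x 1 1 ^ m * x 0 1) :=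
  pow_comm_right (hx.col 0 1 1 (by decide)) m

lemma Y_Xpow_succ (hx : IsManinSystem x) (m : ℕ) : x 1 1 * x 0 0 ^ (m+1)
    = x 0 0 ^ (m+1) * x 1 1
      - ((q - q⁻¹) * qint ((m:ℤ)+1)) • (x 1 0 * x 0 0 ^ m * x 0 1) := by
  induction m with
  | zero =>
    have h := hx.main 1 1 0 0 (by decide) (by decide)
    simpa [qint_one] using h
  | succ m ih =>
    have h2 : x 0 0 ^ (m+1) * x 1 1 * x 0 0 = x 0 0 ^ (m+2) * x 1 1
        - ((q - q⁻¹) * q ^ (m+1)) • (x 1 0 * x 0 0 ^ (m+1) * x 0 1) := by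
      rw [mul_assoc, hx.main 1 1 0 0 (by decide) (by decide), mul_sub, ← mul_assoc, ← pow_succ,
        mul_smul_comm, ← mul_assoc, Xpow_Z hx (m+1), smul_mul_assoc, smul_smul, mul_assoc]
    have h3 : x 1 0 * x 0 0 ^ m * x 0 1 * x 0 0 = q⁻¹ • (x 1 0 * x 0 0 ^ (m+1) * x 0 1) := by
      rw [mul_assoc, hx.row 0 1 0 (by decide), mul_smul_comm, ← mul_assoc]
      congr 1
      rw [mul_assoc (x 1 0) (x 0 0 ^ m) (x 0 0), ← pow_succ]
    have hs : (q - q⁻¹) * q ^ (m+1) + (q - q⁻¹) * qint ((m:ℤ)+1) * q⁻¹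
        = (q - q⁻¹) * qint (((m+1:ℕ):ℤ)+1) := by
      push_cast
      rw [show ((m:ℤ)+1+1) = ((m:ℤ)+1)+1 by ring, qint_succ ((m:ℤ)+1),
        show ((m:ℤ)+1) = ((m+1:ℕ):ℤ) by push_cast; ring, zpow_natCast]
      ring
    rw [pow_succ, ← mul_assoc, ih, sub_mul, smul_mul_assoc, h2, h3, smul_smul,
      sub_sub, ← add_smul, hs, ← pow_succ]

lemma Y_Xpow (hx : IsManinSystem x) (m : ℕ) : x 1 1 * x 0 0 ^ m
    = x 0 0 ^ m * x 1 1 - ((q - q⁻¹) * qint (m:ℤ)) • (x 1 0 * x 0 0 ^ (m-1) * x 0 1) := by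
  rcases m with _ | m
  · simp [qint_zero]
  · have := Y_Xpow_succ hx m
    simpa using this

lemma Y_mul_T (hx : IsManinSystem x) (a b s : ℕ) (hs : s ≤ a) :
    x 1 1 * (x 1 0 ^ s * x 0 0 ^ (b-s) * x 1 1 ^ (a-s) * x 0 1 ^ s)
    = (q⁻¹^s) • (x 1 0 ^ s * x 0 0 ^ (b-s) * x 1 1 ^ (a+1-s) * x 0 1 ^ s)
      + ((q⁻¹-q) * q⁻¹^s * q^(a-s) * qint ((b-s : ℕ))) •
        (x 1 0 ^ (s+1) * x 0 0 ^ (b-(s+1)) * x 1 1 ^ (a-s) * x 0 1 ^ (s+1)) := by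
  have h2 : x 1 0 ^ s * (x 1 0 * x 0 0 ^ (b-s-1) * x 0 1) * x 1 1 ^ (a-s) * x 0 1 ^ s
      = (q^(a-s)) • (x 1 0 ^ (s+1) * x 0 0 ^ (b-(s+1)) * x 1 1 ^ (a-s) * x 0 1 ^ (s+1)) := by
    have hbs : b - s - 1 = b - (s+1) := by omega
    simp only [← mul_assoc, hbs, ← pow_succ]
    rw [mul_assoc (x 1 0 ^ (s+1) * x 0 0 ^ (b-(s+1))) (x 0 1) (x 1 1 ^ (a-s)),
      W_Ypow hx (a-s), mul_smul_comm, smul_mul_assoc]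
    congr 1
    simp only [← mul_assoc]
    rw [mul_assoc _ (x 0 1) (x 0 1 ^ s), ← pow_succ']
  have hk : (a-s) + 1 = a + 1 - s := by omega
  simp only [← mul_assoc]
  rw [mul_assoc (x 1 1) (x 1 0 ^ s), ← mul_assoc (x 1 1) (x 1 0 ^ s), Y_Zpow hx s,
    smul_mul_assoc, smul_mul_assoc, smul_mul_assoc]
  rw [mul_assoc (x 1 0 ^ s) (x 1 1) (x 0 0 ^ (b-s)), Y_Xpow hx (b-s)]
  rw [mul_sub, sub_mul, sub_mul, smul_sub]
  rw [mul_smul_comm, smul_mul_assoc, smul_mul_assoc, h2, smul_smul, smul_smul]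
  rw [← mul_assoc (x 1 0 ^ s) (x 0 0 ^ (b-s)) (x 1 1)]
  rw [mul_assoc _ (x 1 1) (x 1 1 ^ (a-s)), ← pow_succ', hk]
  rw [sub_eq_add_neg, ← neg_smul]
  rw [show -(q⁻¹ ^ s * ((q - q⁻¹) * qint ((b-s:ℕ))) * q ^ (a-s))
      = (q⁻¹-q) * q⁻¹^s * q^(a-s) * qint ((b-s:ℕ)) from by ring]
theorem aux (hx : IsManinSystem x) (b : ℕ) : ∀ a, x 1 1 ^ a * x 0 0 ^ b
    = ∑ s ∈ Finset.range (a+1),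
        cc a b s • (x 1 0 ^ s * x 0 0 ^ (b-s) * x 1 1 ^ (a-s) * x 0 1 ^ s) := by
  intro a
  induction a with
  | zero => simp [cc_zero]
  | succ a ih =>
    rw [pow_succ', mul_assoc, ih, Finset.mul_sum]
    have hterm : ∀ s ∈ Finset.range (a+1),
        x 1 1 * (cc a b s • (x 1 0^s * x 0 0^(b-s) * x 1 1^(a-s) * x 0 1^s))
        = (cc a b s * q⁻¹^s) • (x 1 0^s * x 0 0^(b-s) * x 1 1^(a+1-s) * x 0 1^s)
          + (cc a b s * ((q⁻¹-q) * q⁻¹^s * q^(a-s) * qint ((b-s:ℕ)))) •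
            (x 1 0^(s+1) * x 0 0^(b-(s+1)) * x 1 1^(a-s) * x 0 1^(s+1)) := by
      intro s hsm
      have hs : s ≤ a := Nat.lt_succ_iff.mp (Finset.mem_range.mp hsm)
      rw [mul_smul_comm, Y_mul_T hx a b s hs, smul_add, smul_smul, smul_smul]
    rw [Finset.sum_congr rfl hterm, Finset.sum_add_distrib]
    conv_rhs => rw [Finset.sum_range_succ']
    simp only [Nat.succ_sub_succ]
    have hA : (∑ s ∈ Finset.range (a+1),
          (cc a b s * q⁻¹^s) • (x 1 0^s * x 0 0^(b-s) * x 1 1^(a+1-s) * x 0 1^s))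
        = (cc a b 0 * q⁻¹^0) • (x 1 0^0 * x 0 0^(b-0) * x 1 1^(a+1-0) * x 0 1^0)
          + ∑ s ∈ Finset.range (a+1), (cc a b (s+1) * q⁻¹^(s+1)) •
              (x 1 0^(s+1) * x 0 0^(b-(s+1)) * x 1 1^(a-s) * x 0 1^(s+1)) := by
      rw [Finset.sum_range_succ'
        (fun s => (cc a b s * q⁻¹^s) • (x 1 0^s * x 0 0^(b-s) * x 1 1^(a+1-s) * x 0 1^s)) a]
      simp only [Nat.succ_sub_succ]
      rw [Finset.sum_range_succ, cc_eq_zero' a b (a+1) (by omega), zero_mul, zero_smul,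
        add_zero, add_comm]
    rw [hA, add_assoc, add_comm ((cc a b 0 * q⁻¹^0) • _), add_assoc]
    rw [← add_assoc, ← Finset.sum_add_distrib]
    congr 1
    · apply Finset.sum_congr rfl
      intro s hsm
      have hs : s ≤ a := Nat.lt_succ_iff.mp (Finset.mem_range.mp hsm)
      rw [← add_smul]
      congr 1
      rw [c_rec a b s hs]
      ring
    · rw [cc_zero, cc_zero, pow_zero, mul_one]
end Alg

/-- Lemma `fact`: the straightening rule
`x_{2,2}^a x_{1,1}^b = ∑_{s=0}^{min(a,b)} q^{−s(s−1)/2} (q^{−1} − q)^s [s]_q! [a choose s]_q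
[b choose s]_q · x_{2,1}^s x_{1,1}^{b−s} x_{2,2}^{a−s} x_{1,2}^s` in `𝒪_q(2)`.
(Indices `1, 2` of the paper correspond to `0, 1 : Fin 2`.) -/
theorem fact_straightening {A : Type*} [Ring A] [Algebra (RatFunc ℚ) A]
    (x : Fin 2 → Fin 2 → A) (hx : IsManinSystem x) (a b : ℕ) :
    x 1 1 ^ a * x 0 0 ^ b =
      ∑ s ∈ Finset.range (min a b + 1),
        (q ^ (-((s * (s - 1) / 2 : ℕ) : ℤ)) * (q⁻¹ - q) ^ s * qfact s *
            qbinom (a : ℤ) s * qbinom (b : ℤ) s) •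
          (x 1 0 ^ s * x 0 0 ^ (b - s) * x 1 1 ^ (a - s) * x 0 1 ^ s) := by
  have hsub : Finset.range (min a b + 1) ⊆ Finset.range (a+1) := by
    intro t ht
    simp only [Finset.mem_range] at ht ⊢
    omega
  have hz : ∀ s ∈ Finset.range (a+1), s ∉ Finset.range (min a b + 1) →
      (q ^ (-((s * (s - 1) / 2 : ℕ) : ℤ)) * (q⁻¹ - q) ^ s * qfact s *
          qbinom (a : ℤ) s * qbinom (b : ℤ) s) •
        (x 1 0 ^ s * x 0 0 ^ (b - s) * x 1 1 ^ (a - s) * x 0 1 ^ s) = 0 := by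
    intro s hs1 hs2
    simp only [Finset.mem_range] at hs1 hs2
    have hbs : b < s := by omega
    rw [qbinom_nat_zero b s hbs, mul_zero, zero_smul]
  rw [aux hx b a, Finset.sum_subset hsub hz]
  apply Finset.sum_congr rfl
  intro s _
  rw [cc]
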